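/- Let G be a 3-regular, 3-edge-connected multigraph, let (v, w) be an edge of G, and let u be a vertex of G distinct from v and w. Then G contains a chordless cycle that contains the edge (v, w) and does not contain the vertex u. -/

import Mathlib

/-! Basic theory of loopless undirected multigraphs. -/

/-- A loopless undirected multigraph on the vertex type `V`: a type of edges
together with a map assigning to each edge its unordered pair of (distinct)
endpoints.  All multigraphs are assumed to have finitely many edges. -/
structure Multigraph (V : Type) where
  Edge : Type
  ends : Edge → Sym2 V
  loopless : ∀ e, ¬ (ends e).IsDiag
  edge_finite : Finite Edge

namespace Multigraph

open scoped Classical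

variable {V : Type}

instance (G : Multigraph V) : Finite G.Edge := G.edge_finite

lemma exists_pair_eq {α : Type} (z : Sym2 α) : ∃ x y, z = s(x, y) := by
  induction z using Sym2.ind with
  | _ x y => exact ⟨x, y, rfl⟩

lemma map_not_isDiag {α β : Type} (f : α → β) (z : Sym2 α)
    (hf : ∀ x ∈ z, ∀ y ∈ z, f x = f y → x = y) (hz : ¬ z.IsDiag) :
    ¬ (z.map f).IsDiag := by
  obtain ⟨x, y, rfl⟩ := exists_pair_eq z
  rw [Sym2.map_pair_eq, Sym2.mk_isDiag_iff]
  rw [Sym2.mk_isDiag_iff] at hz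
  exact fun h => hz (hf x (by simp) y (by simp) h)

/-- Restrict an unordered pair, all of whose members satisfy `P`, to an
unordered pair of elements of the subtype `{x // P x}`. -/
noncomputable def sym2RestrictP {α : Type} (P : α → Prop) (z : Sym2 α) (h : ∀ x ∈ z, P x) :
    Sym2 {x : α // P x} :=
  z.map fun x =>
    if hx : P x then ⟨x, hx⟩
    else Classical.choice (by
      obtain ⟨a, b, rfl⟩ := exists_pair_eq z
      exact ⟨⟨a, h a (by simp)⟩⟩)

lemma sym2RestrictP_not_isDiag {α : Type} (P : α → Prop) (z : Sym2 α) (h : ∀ x ∈ z, P x)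
    (hz : ¬ z.IsDiag) : ¬ (sym2RestrictP P z h).IsDiag := by
  apply map_not_isDiag
  · intro a ha b hb hab
    rw [dif_pos (h a ha), dif_pos (h b hb)] at hab
    exact congrArg Subtype.val hab
  · exact hz

/-- Walks in a multigraph, recorded as alternating sequences of vertices and edges. -/
inductive Walk (G : Multigraph V) : V → V → Type
  | nil (v : V) : Walk G v v
  | cons {u v w : V} (e : G.Edge) (he : G.ends e = s(u, v)) (p : Walk G v w) : Walk G u w

namespace Walk

variable {G : Multigraph V}

/-- The list of edges used by a walk. -/
def edges : ∀ {u v : V}, G.Walk u v → List G.Edge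
  | _, _, nil _ => []
  | _, _, cons e _ p => e :: p.edges

/-- The list of vertices visited by a walk, in order. -/
def support : ∀ {u v : V}, G.Walk u v → List V
  | u, _, nil _ => [u]
  | u, _, cons _ _ p => u :: p.support

end Walk

/-- `G.HasEDP u v k` : there are (at least) `k` pairwise edge-disjoint paths
between `u` and `v` in `G` (formalized as `k` pairwise edge-disjoint trails,
which is equivalent). -/
def HasEDP (G : Multigraph V) (u v : V) (k : ℕ) : Prop :=
  ∃ P : Fin k → G.Walk u v,
    (∀ i, (P i).edges.Nodup) ∧
    ∀ i j, i ≠ j → ∀ e, e ∈ (P i).edges → e ∉ (P j).edges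

/-- `G` is `k`-edge-connected: between any two distinct vertices there are at
least `k` pairwise edge-disjoint paths. -/
def EdgeConnected (G : Multigraph V) (k : ℕ) : Prop :=
  Nontrivial V ∧ ∀ u v : V, u ≠ v → G.HasEDP u v k

/-- `G` is exactly `k`-edge-connected: between any two distinct vertices there
are exactly `k` pairwise edge-disjoint paths (at least `k`, and not `k + 1`). -/
def ExactlyEdgeConnected (G : Multigraph V) (k : ℕ) : Prop :=
  Nontrivial V ∧ ∀ u v : V, u ≠ v → G.HasEDP u v k ∧ ¬ G.HasEDP u v (k + 1)

/-- The degree of a vertex: the number of edges incident to it. -/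
noncomputable def degree (G : Multigraph V) (v : V) : ℕ :=
  {e : G.Edge | v ∈ G.ends e}.ncard

/-- Two vertices are adjacent if some edge joins them. -/
def Adj (G : Multigraph V) (u v : V) : Prop := ∃ e : G.Edge, G.ends e = s(u, v)

/-- `G` restricted to `S` is connected (witnessed by walks staying inside `S`). -/
def ConnectedOn (G : Multigraph V) (S : Set V) : Prop :=
  ∀ u ∈ S, ∀ v ∈ S, ∃ p : G.Walk u v, ∀ x ∈ p.support, x ∈ S

/-- A multigraph is connected if it is nonempty and any two vertices are
joined by a walk. -/
def Connected (G : Multigraph V) : Prop :=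
  Nonempty V ∧ ∀ u v : V, Nonempty (G.Walk u v)

/-- A multigraph is 2-vertex-connected (biconnected) if it is connected and
removing any single vertex leaves it connected. -/
def Biconnected (G : Multigraph V) : Prop :=
  G.Connected ∧ ∀ x : V, G.ConnectedOn {x}ᶜ

/-- A closed walk is a cycle if it repeats no edge, repeats no vertex except
the base point, and has length at least 2 (a double edge is a cycle of
length 2; loops are excluded since multigraphs are loopless). -/
def IsCycle {G : Multigraph V} {v : V} (p : G.Walk v v) : Prop :=
  p.edges.Nodup ∧ p.support.tail.Nodup ∧ 2 ≤ p.edges.length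

/-- A closed walk is chordless if no edge outside of it joins two of its
vertices (a parallel copy of one of its edges counts as a chord). -/
def IsChordless {G : Multigraph V} {v : V} (p : G.Walk v v) : Prop :=
  ∀ e : G.Edge, e ∉ p.edges → ∀ x y : V, G.ends e = s(x, y) →
    x ∈ p.support → y ∈ p.support → False

/-- `G.ReachAvoid S x y`: there is a walk from `x` to `y` avoiding the set `S`. -/
def ReachAvoid (G : Multigraph V) (S : Set V) (x y : V) : Prop :=
  ∃ p : G.Walk x y, ∀ z ∈ p.support, z ∉ S

/-- The vertex sets of the connected components of `G ∖ S`.  For a cycle (or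
any subgraph) `C`, the `C`-partition of the paper consists of `C` together
with these components; its size is the number of components. -/
def componentsAvoiding (G : Multigraph V) (S : Set V) : Set (Set V) :=
  {T | ∃ x, x ∉ S ∧ T = {y | G.ReachAvoid S x y}}

/-- Contract the (nonempty) vertex set `S` of `G` to a single new vertex
(`none`), deleting the edges inside `S`. -/
noncomputable def contractSet (G : Multigraph V) (S : Set V) :
    Multigraph (Option {x : V // x ∉ S}) where
  Edge := {e : G.Edge // ¬ ∀ x ∈ G.ends e, x ∈ S}
  ends e := (G.ends e.1).map fun x => if h : x ∈ S then none else some ⟨x, h⟩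
  loopless := by
    rintro ⟨e, he⟩ hd
    obtain ⟨x, y, hxy⟩ := exists_pair_eq (G.ends e)
    have hxyne : x ≠ y := by
      have h0 := G.loopless e
      rw [hxy, Sym2.mk_isDiag_iff] at h0
      exact h0
    have hor : x ∉ S ∨ y ∉ S := by
      by_contra hcon
      push_neg at hcon
      refine he fun z hz => ?_
      rw [hxy, Sym2.mem_iff] at hz
      rcases hz with rfl | rfl
      exacts [hcon.1, hcon.2]
    simp only [hxy, Sym2.map_pair_eq, Sym2.mk_isDiag_iff] at hd
    rcases hor with hx | hy
    · rw [dif_neg hx] at hd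
      by_cases hy : y ∈ S
      · rw [dif_pos hy] at hd; exact nomatch hd
      · rw [dif_neg hy] at hd
        exact hxyne (congrArg Subtype.val (Option.some_injective _ hd))
    · rw [dif_neg hy] at hd
      by_cases hx : x ∈ S
      · rw [dif_pos hx] at hd; exact nomatch hd
      · rw [dif_neg hx] at hd
        exact hxyne (congrArg Subtype.val (Option.some_injective _ hd))
  edge_finite := by
    have := G.edge_finite
    exact inferInstance

/-- The subgraph of `G` induced by the vertex set `S`. -/
noncomputable def induce (G : Multigraph V) (S : Set V) : Multigraph ↥S where
  Edge := {e : G.Edge // ∀ x ∈ G.ends e, x ∈ S}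
  ends e := sym2RestrictP (· ∈ S) (G.ends e.1) e.2
  loopless := fun e => sym2RestrictP_not_isDiag _ _ _ (G.loopless e.1)
  edge_finite := by
    have := G.edge_finite
    exact inferInstance

/-- Isomorphism of multigraphs. -/
structure Iso {V W : Type} (G : Multigraph V) (H : Multigraph W) where
  vmap : V ≃ W
  emap : G.Edge ≃ H.Edge
  ends_vmap : ∀ e : G.Edge, H.ends (emap e) = (G.ends e).map vmap

/-- `G` is quasi `k`-regular: at most one vertex has degree different from `k`. -/
def QuasiRegular (G : Multigraph V) (k : ℕ) : Prop :=
  {v : V | G.degree v ≠ k}.Subsingleton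

end Multigraph
namespace Multigraph

open scoped Classical

variable {V : Type}

/-- Block gluing: identify the vertex `u₁` of `G₁` with the vertex `u₂` of `G₂`
(the identified vertex is represented by `Sum.inl u₁`), keeping all edges. -/
noncomputable def blockGlue {V₁ V₂ : Type} (G₁ : Multigraph V₁) (G₂ : Multigraph V₂)
    (u₁ : V₁) (u₂ : V₂) : Multigraph (V₁ ⊕ {y : V₂ // y ≠ u₂}) where
  Edge := G₁.Edge ⊕ G₂.Edge
  ends e :=
    match e with
    | .inl e => (G₁.ends e).map Sum.inl
    | .inr e => (G₂.ends e).map fun y => if h : y = u₂ then Sum.inl u₁ else Sum.inr ⟨y, h⟩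
  loopless := by
    rintro (e | e) hd
    · exact map_not_isDiag _ _ (fun x _ y _ h => Sum.inl_injective h) (G₁.loopless e) hd
    · refine map_not_isDiag _ _ (fun x _ y _ h => ?_) (G₂.loopless e) hd
      by_cases hx : x = u₂ <;> by_cases hy : y = u₂
      · rw [hx, hy]
      · simp [hx, hy] at h
      · simp [hx, hy] at h
      · simp [hx, hy] at h
        exact h
  edge_finite := by
    have := G₁.edge_finite; have := G₂.edge_finite
    exact inferInstance

/-- `k`-bridge addition: add a new vertex (`none`) joined to the existing
vertex `v` by `k` parallel edges. -/
def bridgeAdd (G : Multigraph V) (v : V) (k : ℕ) : Multigraph (Option V) where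
  Edge := G.Edge ⊕ Fin k
  ends e :=
    match e with
    | .inl e => (G.ends e).map some
    | .inr _ => s(none, some v)
  loopless := by
    rintro (e | i) hd
    · exact map_not_isDiag _ _ (fun x _ y _ h => Option.some_injective _ h) (G.loopless e) hd
    · rw [Sym2.mk_isDiag_iff] at hd
      exact nomatch hd
  edge_finite := by
    have := G.edge_finite
    exact inferInstance

end Multigraph
namespace Multigraph

open scoped Classical

variable {V : Type}

lemma other_ne {G : Multigraph V} {u : V} {e : G.Edge} (h : u ∈ G.ends e) :
    Sym2.Mem.other h ≠ u := by
  intro heq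
  have hs := Sym2.other_spec h
  rw [heq] at hs
  have hl := G.loopless e
  rw [← hs, Sym2.mk_isDiag_iff] at hl
  exact hl rfl

/-- Vertex gluing: given vertices `u₁` of `G₁` and `u₂` of `G₂`, both of degree
`k` (witnessed by enumerations `ι₁`, `ι₂` of their incident edges), delete
`u₁` and `u₂` and join, for each `i`, the other endpoint of the `i`-th edge at
`u₁` to the other endpoint of the `i`-th edge at `u₂`. -/
noncomputable def vertexGlue {V₁ V₂ : Type} (G₁ : Multigraph V₁) (G₂ : Multigraph V₂)
    (u₁ : V₁) (u₂ : V₂) {k : ℕ}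
    (ι₁ : Fin k ≃ {e : G₁.Edge // u₁ ∈ G₁.ends e})
    (ι₂ : Fin k ≃ {e : G₂.Edge // u₂ ∈ G₂.ends e}) :
    Multigraph ({x : V₁ // x ≠ u₁} ⊕ {y : V₂ // y ≠ u₂}) where
  Edge := {e : G₁.Edge // u₁ ∉ G₁.ends e} ⊕ {e : G₂.Edge // u₂ ∉ G₂.ends e} ⊕ Fin k
  ends e :=
    match e with
    | .inl e =>
        (sym2RestrictP (· ≠ u₁) (G₁.ends e.1) fun x hx hxe => e.2 (hxe ▸ hx)).map Sum.inl
    | .inr (.inl e) =>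
        (sym2RestrictP (· ≠ u₂) (G₂.ends e.1) fun y hy hye => e.2 (hye ▸ hy)).map Sum.inr
    | .inr (.inr i) =>
        s(Sum.inl ⟨Sym2.Mem.other (ι₁ i).2, other_ne (ι₁ i).2⟩,
          Sum.inr ⟨Sym2.Mem.other (ι₂ i).2, other_ne (ι₂ i).2⟩)
  loopless := by
    rintro (e | e | i) hd
    · exact map_not_isDiag _ _ (fun x _ y _ h => Sum.inl_injective h)
        (sym2RestrictP_not_isDiag _ _ _ (G₁.loopless e.1)) hd
    · exact map_not_isDiag _ _ (fun x _ y _ h => Sum.inr_injective h)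
        (sym2RestrictP_not_isDiag _ _ _ (G₂.loopless e.1)) hd
    · rw [Sym2.mk_isDiag_iff] at hd
      exact nomatch hd
  edge_finite := by
    have := G₁.edge_finite; have := G₂.edge_finite
    exact inferInstance

/-- Cycle expansion: replace the vertex `u`, of degree `d` with incident edges
enumerated by `ι`, by a cycle on `d'` new vertices `u_0, …, u_{d'-1}`
(`2 ≤ d' ≤ d`); the `i`-th former edge at `u` is attached to `u_i` for
`i < d' - 1` and to `u_{d'-1}` for `i ≥ d' - 1`, so each of `u_0, …, u_{d'-2}`
receives exactly one of them and `u_{d'-1}` receives the rest. -/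
noncomputable def cycleExpand (G : Multigraph V) (u : V) {d d' : ℕ}
    (h2 : 2 ≤ d') (hdd : d' ≤ d)
    (ι : Fin d ≃ {e : G.Edge // u ∈ G.ends e}) :
    Multigraph ({x : V // x ≠ u} ⊕ Fin d') where
  Edge := {e : G.Edge // u ∉ G.ends e} ⊕ (Fin d ⊕ Fin d')
  ends e :=
    match e with
    | .inl e =>
        (sym2RestrictP (· ≠ u) (G.ends e.1) fun x hx hxe => e.2 (hxe ▸ hx)).map Sum.inl
    | .inr (.inl i) =>
        s(Sum.inr ⟨min i.1 (d' - 1), by omega⟩,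
          Sum.inl ⟨Sym2.Mem.other (ι i).2, other_ne (ι i).2⟩)
    | .inr (.inr j) =>
        s(Sum.inr j, Sum.inr ⟨(j.1 + 1) % d', Nat.mod_lt _ (by omega)⟩)
  loopless := by
    rintro (e | i | j) hd
    · exact map_not_isDiag _ _ (fun x _ y _ h => Sum.inl_injective h)
        (sym2RestrictP_not_isDiag _ _ _ (G.loopless e.1)) hd
    · rw [Sym2.mk_isDiag_iff] at hd
      exact nomatch hd
    · rw [Sym2.mk_isDiag_iff] at hd
      have hj : j.1 < d' := j.2
      have := congrArg Fin.val (Sum.inr_injective hd)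
      simp only at this
      rcases Nat.lt_or_ge (j.1 + 1) d' with h | h
      · rw [Nat.mod_eq_of_lt h] at this; omega
      · have hj1 : j.1 + 1 = d' := by omega
        rw [hj1, Nat.mod_self] at this; omega
  edge_finite := by
    have := G.edge_finite
    exact inferInstance

end Multigraph
namespace Multigraph

open scoped Classical

variable {V : Type}

/-- The edges of `G` crossing the vertex bipartition `⟨A, Aᶜ⟩`. -/
def cutEdges (G : Multigraph V) (A : Set V) : Set G.Edge :=
  {e | (∃ x ∈ G.ends e, x ∈ A) ∧ ∃ y ∈ G.ends e, y ∉ A}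

/-- The bipartition `⟨A, Aᶜ⟩` is a minimum edge cut of `G`: both sides are
nonempty and no other bipartition has fewer crossing edges. -/
def IsMinCut (G : Multigraph V) (A : Set V) : Prop :=
  A.Nonempty ∧ Aᶜ.Nonempty ∧
    ∀ B : Set V, B.Nonempty → Bᶜ.Nonempty →
      (G.cutEdges A).ncard ≤ (G.cutEdges B).ncard

/-- One side of a vertex splitting: keep the side `A` of the cut `⟨A, Aᶜ⟩`,
delete the other side, and reattach each cut edge to a single new vertex
(`none`). -/
noncomputable def splitSide (G : Multigraph V) (A : Set V) :
    Multigraph (Option {x : V // x ∈ A}) where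
  Edge := {e : G.Edge // ∀ x ∈ G.ends e, x ∈ A} ⊕ {e : G.Edge // e ∈ G.cutEdges A}
  ends e :=
    match e with
    | .inl e => (sym2RestrictP (· ∈ A) (G.ends e.1) e.2).map some
    | .inr e =>
        s(none, some ⟨Classical.choose e.2.1, (Classical.choose_spec e.2.1).2⟩)
  loopless := by
    rintro (e | e) hd
    · exact map_not_isDiag _ _ (fun x _ y _ h => Option.some_injective _ h)
        (sym2RestrictP_not_isDiag _ _ _ (G.loopless e.1)) hd
    · rw [Sym2.mk_isDiag_iff] at hd
      exact nomatch hd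
  edge_finite := by
    have := G.edge_finite
    exact inferInstance

/-- The dumbbell graph: two vertices joined by three parallel edges. -/
def dumbbell : Multigraph (Fin 2) where
  Edge := Fin 3
  ends _ := s(0, 1)
  loopless := fun _ h => absurd (Sym2.mk_isDiag_iff.mp h) (by decide)
  edge_finite := inferInstance

/-- `B` is (the vertex set of) a block of `G`: a maximal set of vertices
inducing a connected, 2-vertex-connected subgraph. -/
def IsBlock (G : Multigraph V) (B : Set V) : Prop :=
  (G.induce B).Biconnected ∧
    ∀ B' : Set V, B ⊆ B' → (G.induce B').Biconnected → B' = B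

/-- The set of double edges of `G`, as unordered pairs of distinct parallel
edges. -/
def doubleEdges (G : Multigraph V) : Set (Sym2 G.Edge) :=
  {z | ∃ e f : G.Edge, z = s(e, f) ∧ e ≠ f ∧ G.ends e = G.ends f}

/-- A collapsible cycle: a chordless, non-articulation cycle, all but at most
one of whose vertices have degree 3, whose contraction to a single vertex
yields an exactly 3-edge-connected multigraph. -/
def IsCollapsible {G : Multigraph V} {v : V} (p : G.Walk v v) : Prop :=
  IsCycle p ∧ IsChordless p ∧
    (G.componentsAvoiding {x | x ∈ p.support}).Subsingleton ∧
    {x : V | x ∈ p.support ∧ G.degree x ≠ 3}.Subsingleton ∧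
    (G.contractSet {x | x ∈ p.support}).ExactlyEdgeConnected 3

end Multigraph
namespace Multigraph

open scoped Classical

variable {V : Type}

/-- Smooth out the degree-two vertex `x` (whose two incident edges are
`e₁ = (x, a)` and `e₂ = (x, b)`): delete `x`, `e₁` and `e₂` and add a single
new edge joining `a` and `b`. -/
noncomputable def smoothAt {S : Set V} (H : Multigraph ↥S) (x a b : ↥S)
    (e₁ e₂ : H.Edge) (hne : e₁ ≠ e₂)
    (h₁ : H.ends e₁ = s(x, a)) (h₂ : H.ends e₂ = s(x, b))
    (hax : a ≠ x) (hbx : b ≠ x) (hab : a ≠ b)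
    (hdeg : ∀ e : H.Edge, x ∈ H.ends e → e = e₁ ∨ e = e₂) :
    Multigraph ↥(S \ {(x : V)}) where
  Edge := {e : H.Edge // e ≠ e₁ ∧ e ≠ e₂} ⊕ Unit
  ends e :=
    match e with
    | .inl e =>
        (sym2RestrictP (fun y : ↥S => y ≠ x) (H.ends e.1)
            (fun y hy hyx => by
              subst hyx
              rcases hdeg e.1 hy with h | h
              exacts [e.2.1 h, e.2.2 h])).map
          fun y => ⟨y.1.1, y.1.2, fun hh => y.2 (Subtype.ext hh)⟩
    | .inr _ =>
        s(⟨a.1, a.2, fun hh => hax (Subtype.ext hh)⟩,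
          ⟨b.1, b.2, fun hh => hbx (Subtype.ext hh)⟩)
  loopless := by
    rintro (e | e) hd
    · refine map_not_isDiag _ _ (fun y _ z _ h => ?_)
        (sym2RestrictP_not_isDiag _ _ _ (H.loopless e.1)) hd
      have hv := Subtype.ext_iff.mp h
      exact Subtype.ext (Subtype.ext hv)
    · rw [Sym2.mk_isDiag_iff] at hd
      have hv := Subtype.ext_iff.mp hd
      exact hab (Subtype.ext hv)
  edge_finite := by
    have := H.edge_finite
    exact inferInstance

/-- `SmoothSeq H K` : the multigraph `K` is obtained from `H` by a finite
sequence of smoothings of degree-two vertices. -/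
inductive SmoothSeq {V : Type} : ∀ {S T : Set V}, Multigraph ↥S → Multigraph ↥T → Prop
  | refl {S : Set V} (H : Multigraph ↥S) : SmoothSeq H H
  | step {S T : Set V} {H : Multigraph ↥S} {K : Multigraph ↥T}
      (x a b : ↥S) (e₁ e₂ : H.Edge) (hne : e₁ ≠ e₂)
      (h₁ : H.ends e₁ = s(x, a)) (h₂ : H.ends e₂ = s(x, b))
      (hax : a ≠ x) (hbx : b ≠ x) (hab : a ≠ b)
      (hdeg : ∀ e : H.Edge, x ∈ H.ends e → e = e₁ ∨ e = e₂) :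
      SmoothSeq (smoothAt H x a b e₁ e₂ hne h₁ h₂ hax hbx hab hdeg) K → SmoothSeq H K

/-- `G` is a 3-thick tree: it is obtained from a tree by replacing every tree
edge by three parallel edges. -/
def IsThreeThickTree (G : Multigraph V) : Prop :=
  ∃ T : SimpleGraph V, T.IsTree ∧
    ∃ f : G.Edge ≃ T.edgeSet × Fin 3, ∀ e : G.Edge, G.ends e = ((f e).1 : Sym2 V)

/-- The graphs obtainable from dumbbell graphs by cycle expansions and block
gluings (up to isomorphism). -/
inductive Synth3 : ∀ {V : Type}, Multigraph V → Prop
  | dumbbell : Synth3 dumbbell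
  | glue {V₁ V₂ : Type} {G₁ : Multigraph V₁} {G₂ : Multigraph V₂} (u₁ : V₁) (u₂ : V₂) :
      Synth3 G₁ → Synth3 G₂ → Synth3 (blockGlue G₁ G₂ u₁ u₂)
  | expand {V : Type} {G : Multigraph V} (u : V) {d d' : ℕ} (h2 : 2 ≤ d') (hdd : d' ≤ d)
      (ι : Fin d ≃ {e : G.Edge // u ∈ G.ends e}) :
      Synth3 G → Synth3 (G.cycleExpand u h2 hdd ι)
  | iso {V W : Type} {G : Multigraph V} {H : Multigraph W} :
      Synth3 G → Iso G H → Synth3 H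

/-- The graphs obtainable from 3-thick trees by block-respecting cycle
expansions (cycle expansions whose new cycle lies inside a single block of the
resulting graph), up to isomorphism. -/
inductive BRSynth : ∀ {V : Type}, Multigraph V → Prop
  | base {V : Type} {G : Multigraph V} : IsThreeThickTree G → BRSynth G
  | expand {V : Type} {G : Multigraph V} (u : V) {d d' : ℕ} (h2 : 2 ≤ d') (hdd : d' ≤ d)
      (ι : Fin d ≃ {e : G.Edge // u ∈ G.ends e})
      (hblock : ∃ B : Set ({x : V // x ≠ u} ⊕ Fin d'),
        (G.cycleExpand u h2 hdd ι).IsBlock B ∧ ∀ j : Fin d', Sum.inr j ∈ B) :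
      BRSynth G → BRSynth (G.cycleExpand u h2 hdd ι)
  | iso {V W : Type} {G : Multigraph V} {H : Multigraph W} :
      BRSynth G → Iso G H → BRSynth H

end Multigraph
/-!
Of three edge-disjoint trails from `w` to `v`, at most one uses `e` and at most one passes
through `u` (a passage uses two of the three edges at `u`), so some trail, and hence some path,
avoids both. A shortest such path, closed by `e`, is the cycle: a chord would shortcut the path
unless it is parallel to one of its edges. A parallel pair between `a` and `b` is impossible as
soon as a third vertex `z` exists: the three edge-disjoint trails from `a` to `z` leave `a` through
all three edges at `a`, so two of them pass through `b`, which has degree 3.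
-/

namespace Multigraph

variable {V : Type} {G : Multigraph V}

lemma ne_of_ends_eq {f : G.Edge} {x y : V} (hf : G.ends f = s(x, y)) : x ≠ y := fun h =>
  G.loopless f (by rw [hf, h]; exact Sym2.mk_isDiag_iff.mpr rfl)

namespace Walk

lemma support_eq_cons : ∀ {a b : V} (p : G.Walk a b), p.support = a :: p.support.tail
  | _, _, .nil _ => rfl
  | _, _, .cons _ _ _ => rfl

lemma start_mem_support {a b : V} (p : G.Walk a b) : a ∈ p.support := by
  rw [p.support_eq_cons]; exact List.mem_cons_self

lemma end_mem_support : ∀ {a b : V} (p : G.Walk a b), b ∈ p.support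
  | _, _, .nil _ => List.mem_singleton_self _
  | _, _, .cons _ _ p => List.mem_cons_of_mem _ p.end_mem_support

lemma mem_support_of_mem_edges : ∀ {a b : V} {p : G.Walk a b} {f : G.Edge} {x : V},
    f ∈ p.edges → x ∈ G.ends f → x ∈ p.support
  | _, _, .nil _, _, _, hf, _ => nomatch hf
  | _, _, .cons g hg p, f, x, hf, hx => by
    rcases List.mem_cons.mp hf with rfl | hf
    · rw [hg, Sym2.mem_iff] at hx
      rcases hx with rfl | rfl
      · exact List.mem_cons_self
      · exact List.mem_cons_of_mem _ p.start_mem_support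
    · exact List.mem_cons_of_mem _ (mem_support_of_mem_edges hf hx)

lemma edges_nodup_of_support_nodup : ∀ {a b : V} {p : G.Walk a b},
    p.support.Nodup → p.edges.Nodup
  | _, _, .nil _, _ => List.nodup_nil
  | a, _, .cons g hg p, h => by
    obtain ⟨ha, hp⟩ := List.nodup_cons.mp h
    refine List.nodup_cons.mpr ⟨fun hgp => ha ?_, edges_nodup_of_support_nodup hp⟩
    exact mem_support_of_mem_edges hgp (by rw [hg]; exact Sym2.mem_mk_left a _)

lemma exists_mem_edges_start {a b : V} (p : G.Walk a b) (hab : a ≠ b) :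
    ∃ f ∈ p.edges, a ∈ G.ends f := by
  cases p with
  | nil => exact absurd rfl hab
  | cons g hg p => exact ⟨g, List.mem_cons_self, by rw [hg]; exact Sym2.mem_mk_left _ _⟩

lemma exists_mem_edges_end {a b : V} (p : G.Walk a b) (hab : a ≠ b) :
    ∃ f ∈ p.edges, b ∈ G.ends f := by
  induction p with
  | nil => exact absurd rfl hab
  | @cons a c b g hg p ih =>
    by_cases hcb : c = b
    · subst hcb
      exact ⟨g, List.mem_cons_self, by rw [hg]; exact Sym2.mem_mk_right _ _⟩
    · obtain ⟨f, hf, hbf⟩ := ih hcb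
      exact ⟨f, List.mem_cons_of_mem _ hf, hbf⟩

def append : ∀ {a b c : V}, G.Walk a b → G.Walk b c → G.Walk a c
  | _, _, _, .nil _, q => q
  | _, _, _, .cons e he p, q => .cons e he (p.append q)

@[simp]
lemma edges_append : ∀ {a b c : V} (p : G.Walk a b) (q : G.Walk b c),
    (p.append q).edges = p.edges ++ q.edges
  | _, _, _, .nil _, _ => rfl
  | _, _, _, .cons e _ p, q => congrArg (e :: ·) (p.edges_append q)

lemma support_append : ∀ {a b c : V} (p : G.Walk a b) (q : G.Walk b c),
    (p.append q).support = p.support ++ q.support.tail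
  | _, _, _, .nil _, q => q.support_eq_cons
  | a, _, _, .cons _ _ p, q => congrArg (a :: ·) (p.support_append q)

lemma append_assoc : ∀ {a b c d : V} (p : G.Walk a b) (q : G.Walk b c) (r : G.Walk c d),
    (p.append q).append r = p.append (q.append r)
  | _, _, _, _, .nil _, _, _ => rfl
  | _, _, _, _, .cons e he p, q, r => congrArg (Walk.cons e he) (p.append_assoc q r)

lemma exists_eq_append {a b x : V} (p : G.Walk a b) (hx : x ∈ p.support) :
    ∃ (p₁ : G.Walk a x) (p₂ : G.Walk x b), p = p₁.append p₂ := by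
  induction p with
  | nil a =>
    obtain rfl : x = a := List.mem_singleton.mp hx
    exact ⟨.nil x, .nil x, rfl⟩
  | @cons a c b g hg p ih =>
    by_cases hxa : x = a
    · subst hxa
      exact ⟨.nil x, .cons g hg p, rfl⟩
    · obtain ⟨p₁, p₂, rfl⟩ := ih (List.mem_of_ne_of_mem hxa hx)
      exact ⟨.cons g hg p₁, p₂, rfl⟩

lemma exists_eq_append_append {a b x y : V} (p : G.Walk a b) (hx : x ∈ p.support)
    (hy : y ∈ p.support) :
    ∃ (c d : V) (p₁ : G.Walk a c) (p₂ : G.Walk c d) (p₃ : G.Walk d b),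
      s(c, d) = s(x, y) ∧ p = p₁.append (p₂.append p₃) := by
  obtain ⟨q₁, q₂, rfl⟩ := p.exists_eq_append hx
  rcases List.mem_append.mp (support_append q₁ q₂ ▸ hy) with hy | hy
  · obtain ⟨r₁, r₂, rfl⟩ := q₁.exists_eq_append hy
    exact ⟨y, x, r₁, r₂, q₂, Sym2.eq_swap, append_assoc r₁ r₂ q₂⟩
  · obtain ⟨r₂, r₃, rfl⟩ := q₂.exists_eq_append (List.mem_of_mem_tail hy)
    exact ⟨x, y, q₁, r₂, r₃, rfl, rfl⟩

lemma exists_two_mem_edges_of_mem_support {a b x : V} (p : G.Walk a b) (hp : p.edges.Nodup)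
    (hx : x ∈ p.support) (hxa : x ≠ a) (hxb : x ≠ b) :
    ∃ f ∈ p.edges, ∃ g ∈ p.edges, f ≠ g ∧ x ∈ G.ends f ∧ x ∈ G.ends g := by
  obtain ⟨p₁, p₂, rfl⟩ := p.exists_eq_append hx
  obtain ⟨f, hf, hxf⟩ := p₁.exists_mem_edges_end (Ne.symm hxa)
  obtain ⟨g, hg, hxg⟩ := p₂.exists_mem_edges_start hxb
  rw [edges_append] at hp ⊢
  refine ⟨f, List.mem_append_left _ hf, g, List.mem_append_right _ hg, ?_, hxf, hxg⟩
  rintro rfl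
  exact List.disjoint_of_nodup_append hp hf hg

lemma exists_suffix {a b x : V} (p : G.Walk a b) (hx : x ∈ p.support) :
    ∃ q : G.Walk x b, q.support <:+ p.support ∧ q.edges ⊆ p.edges := by
  induction p with
  | nil a =>
    obtain rfl : x = a := List.mem_singleton.mp hx
    exact ⟨.nil x, List.suffix_refl _, fun _ h => h⟩
  | @cons a c b g hg p ih =>
    by_cases hxp : x ∈ p.support
    · obtain ⟨q, hsuf, hed⟩ := ih hxp
      exact ⟨q, hsuf.trans (List.suffix_cons a _), fun _ h => List.mem_cons_of_mem _ (hed h)⟩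
    · obtain rfl : x = a := (List.mem_cons.mp hx).resolve_right hxp
      exact ⟨.cons g hg p, List.suffix_refl _, fun _ h => h⟩

lemma exists_path {a b : V} (p : G.Walk a b) :
    ∃ q : G.Walk a b, q.support.Nodup ∧ q.support ⊆ p.support ∧ q.edges ⊆ p.edges := by
  induction p with
  | nil a => exact ⟨.nil a, List.nodup_singleton a, fun _ h => h, fun _ h => h⟩
  | @cons a c b g hg p ih =>
    obtain ⟨q, hq, hsup, hed⟩ := ih
    by_cases ha : a ∈ q.support
    · obtain ⟨q', hsuf, hed'⟩ := q.exists_suffix ha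
      exact ⟨q', hsuf.sublist.nodup hq, fun _ h => List.mem_cons_of_mem _ (hsup (hsuf.subset h)),
        fun _ h => List.mem_cons_of_mem _ (hed (hed' h))⟩
    · exact ⟨.cons g hg q, List.nodup_cons.mpr ⟨ha, hq⟩, List.cons_subset_cons _ hsup,
        List.cons_subset_cons _ hed⟩

lemma exists_parallel_or_shorter {a b x y : V} (p : G.Walk a b) (hp : p.support.Nodup)
    {f : G.Edge} (hf : G.ends f = s(x, y)) (hx : x ∈ p.support) (hy : y ∈ p.support) :
    (∃ g ∈ p.edges, G.ends g = G.ends f) ∨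
      ∃ q : G.Walk a b, q.support.Nodup ∧ q.support ⊆ p.support ∧
        q.edges ⊆ f :: p.edges ∧ q.edges.length < p.edges.length := by
  obtain ⟨c, d, p₁, p₂, p₃, hcd, rfl⟩ := p.exists_eq_append_append hx hy
  rw [← hcd] at hf
  cases p₂ with
  | nil => exact absurd rfl (ne_of_ends_eq hf)
  | cons g hg p₂ =>
    cases p₂ with
    | nil => exact .inl ⟨g, by simp [edges], by rw [hg, hf]⟩
    | cons g' hg' p₂ =>
      right
      have hsub : List.Sublist (p₁.append (.cons f hf p₃)).support
          (p₁.append ((cons g hg (cons g' hg' p₂)).append p₃)).support := by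
        simp only [support_append, append, support, List.tail_cons]
        refine List.Sublist.append_left ?_ _
        rw [p₃.support_eq_cons]
        exact ((List.singleton_sublist.mpr p₂.end_mem_support).append
          (List.Sublist.refl _)).cons _
      refine ⟨_, hsub.nodup hp, hsub.subset, ?_, ?_⟩
      · intro h
        simp only [edges_append, edges, List.mem_append, List.mem_cons, append]
        tauto
      · simp [edges, append]

end Walk

lemma length_le_degree {x : V} {l : List G.Edge} (hl : l.Nodup) (hx : ∀ f ∈ l, x ∈ G.ends f) :
    l.length ≤ G.degree x := by
  classical
  rw [← List.toFinset_card_of_nodup hl, ← Set.ncard_coe_finset, degree]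
  exact Set.ncard_le_ncard (fun f hf => hx f (List.mem_toFinset.mp hf)) (Set.toFinite _)

lemma exists_eq_of_injective_of_degree_le {k : ℕ} {x : V} {F : Fin k → G.Edge}
    (hF : Function.Injective F) (hFx : ∀ i, x ∈ G.ends (F i)) (hdeg : G.degree x ≤ k)
    {f : G.Edge} (hf : x ∈ G.ends f) : ∃ i, F i = f := by
  by_contra! hne
  have hl : (f :: List.ofFn F).Nodup := List.nodup_cons.mpr
    ⟨fun h => let ⟨i, hi⟩ := List.mem_ofFn.mp h; hne i hi, List.nodup_ofFn.mpr hF⟩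
  have := (length_le_degree hl (by simp [List.mem_ofFn, hf, hFx])).trans hdeg
  simp at this

lemma notMem_support_of_disjoint {a b x : V} {p q : G.Walk a b} (hp : p.edges.Nodup)
    (hq : q.edges.Nodup) (hpq : ∀ f ∈ p.edges, f ∉ q.edges) (hxa : x ≠ a) (hxb : x ≠ b)
    (hdeg : G.degree x ≤ 3) (hxp : x ∈ p.support) : x ∉ q.support := by
  intro hxq
  obtain ⟨f₁, hf₁, g₁, hg₁, hfg₁, hxf₁, hxg₁⟩ :=
    p.exists_two_mem_edges_of_mem_support hp hxp hxa hxb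
  obtain ⟨f₂, hf₂, g₂, hg₂, hfg₂, hxf₂, hxg₂⟩ :=
    q.exists_two_mem_edges_of_mem_support hq hxq hxa hxb
  have hne : ∀ f ∈ p.edges, ∀ g ∈ q.edges, f ≠ g := fun f hf _ hg hfg =>
    hpq f hf (hfg ▸ hg)
  have hl : [f₁, g₁, f₂, g₂].Nodup := by
    simp [hfg₁, hfg₂, hne _ hf₁ _ hf₂, hne _ hf₁ _ hg₂, hne _ hg₁ _ hf₂, hne _ hg₁ _ hg₂]
  have := (length_le_degree (x := x) hl
    (by simp [hxf₁, hxg₁, hxf₂, hxg₂])).trans hdeg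
  simp at this

lemma HasEDP.exists_walk_avoiding {a b x : V} {k : ℕ} (h : G.HasEDP a b k) (hk : 2 < k)
    (e : G.Edge) (hxa : x ≠ a) (hxb : x ≠ b) (hdeg : G.degree x ≤ 3) :
    ∃ p : G.Walk a b, e ∉ p.edges ∧ x ∉ p.support := by
  classical
  obtain ⟨P, hP, hdisj⟩ := h
  set A := Finset.univ.filter fun i => e ∈ (P i).edges
  set B := Finset.univ.filter fun i => x ∈ (P i).support
  have hA : A.card ≤ 1 := Finset.card_le_one.mpr fun i hi j hj => by
    by_contra hij
    exact hdisj i j hij e (Finset.mem_filter.mp hi).2 (Finset.mem_filter.mp hj).2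
  have hB : B.card ≤ 1 := Finset.card_le_one.mpr fun i hi j hj => by
    by_contra hij
    exact notMem_support_of_disjoint (hP i) (hP j) (hdisj i j hij) hxa hxb hdeg
      (Finset.mem_filter.mp hi).2 (Finset.mem_filter.mp hj).2
  have hlt : (A ∪ B).card < (Finset.univ : Finset (Fin k)).card := by
    rw [Finset.card_univ, Fintype.card_fin]
    linarith [Finset.card_union_le A B]
  obtain ⟨i, -, hi⟩ := Finset.exists_mem_notMem_of_card_lt_card hlt
  simp only [Finset.mem_union, Finset.mem_filter, Finset.mem_univ, true_and, not_or, A, B] at hi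
  exact ⟨P i, hi⟩

lemma mem_ends_of_ends_eq (hdeg : ∀ x, G.degree x ≤ 3) (h3 : G.EdgeConnected 3)
    {f g : G.Edge} (hfg : f ≠ g) (hends : G.ends f = G.ends g) (z : V) : z ∈ G.ends f := by
  obtain ⟨a, b, hab⟩ := exists_pair_eq (G.ends f)
  by_contra hz
  rw [hab, Sym2.mem_iff, not_or] at hz
  obtain ⟨P, hP, hdisj⟩ := h3.2 a z (Ne.symm hz.1)
  choose F hFP hFa using fun i => (P i).exists_mem_edges_start (Ne.symm hz.1)
  have hF : Function.Injective F := fun i j hij => by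
    by_contra hne
    exact hdisj i j hne _ (hFP i) (hij ▸ hFP j)
  have hfa : a ∈ G.ends f := by rw [hab]; exact Sym2.mem_mk_left a b
  obtain ⟨i, rfl⟩ := exists_eq_of_injective_of_degree_le hF hFa (hdeg a) hfa
  obtain ⟨j, rfl⟩ := exists_eq_of_injective_of_degree_le hF hFa (hdeg a) (hends ▸ hfa)
  have hb : b ∈ G.ends (F i) := by rw [hab]; exact Sym2.mem_mk_right a b
  exact notMem_support_of_disjoint (hP i) (hP j) (hdisj i j fun h => hfg (h ▸ rfl))
    (ne_of_ends_eq hab).symm (Ne.symm hz.2) (hdeg b)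
    (Walk.mem_support_of_mem_edges (hFP i) hb)
    (Walk.mem_support_of_mem_edges (hFP j) (hends ▸ hb))

lemma isCycle_cons {v w : V} {e : G.Edge} (he : G.ends e = s(v, w)) {q : G.Walk w v}
    (hq : q.support.Nodup) (hqe : e ∉ q.edges) : IsCycle (.cons e he q) := by
  obtain ⟨f, hf, -⟩ := q.exists_mem_edges_start (ne_of_ends_eq he).symm
  exact ⟨List.nodup_cons.mpr ⟨hqe, Walk.edges_nodup_of_support_nodup hq⟩, hq,
    Nat.succ_le_succ (List.length_pos_of_mem hf)⟩

lemma isChordless_cons_of_minimal (hdeg : ∀ x, G.degree x ≤ 3) (h3 : G.EdgeConnected 3)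
    {u v w : V} {e : G.Edge} (he : G.ends e = s(v, w)) {q : G.Walk w v}
    (hq : q.support.Nodup) (hqu : u ∉ q.support) (hqe : e ∉ q.edges)
    (hmin : ∀ q' : G.Walk w v, q'.support.Nodup → u ∉ q'.support → e ∉ q'.edges →
      ¬ q'.edges.length < q.edges.length) :
    IsChordless (.cons e he q) := by
  intro f hf x y hfxy hx hy
  have hsupp : (Walk.cons e he q).support ⊆ q.support :=
    List.cons_subset.mpr ⟨q.end_mem_support, List.Subset.refl _⟩
  rcases q.exists_parallel_or_shorter hq hfxy (hsupp hx) (hsupp hy) with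
    ⟨g, hg, hgf⟩ | ⟨q', hq', hsub, hedges, hlt⟩
  · have hgf' : g ≠ f := fun h => hf (h ▸ List.mem_cons_of_mem e hg)
    have hu := mem_ends_of_ends_eq hdeg h3 hgf' hgf u
    rw [hgf, hfxy, Sym2.mem_iff] at hu
    rcases hu with rfl | rfl
    exacts [hqu (hsupp hx), hqu (hsupp hy)]
  · refine hmin q' hq' (fun h => hqu (hsub h)) (fun h => ?_) hlt
    rcases List.mem_cons.mp (hedges h) with rfl | h
    · exact hf List.mem_cons_self
    · exact hqe h

/-- **Chordless cycles through an edge avoiding a vertex (3-regular case).**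
Let `G` be a 3-regular, 3-edge-connected multigraph, let `e = (v, w)` be an
edge and let `u` be a vertex distinct from `v` and `w`.  Then `G` contains a
chordless cycle through the edge `e` avoiding the vertex `u`. -/
theorem exists_chordless_cycle_regular {V : Type} (G : Multigraph V)
    (h3 : G.EdgeConnected 3) (hreg : ∀ x : V, G.degree x = 3)
    {v w : V} (e : G.Edge) (he : G.ends e = s(v, w))
    (u : V) (huv : u ≠ v) (huw : u ≠ w) :
    ∃ (x : V) (p : G.Walk x x), IsCycle p ∧ IsChordless p ∧
      e ∈ p.edges ∧ u ∉ p.support := by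
  obtain ⟨p, hpe, hpu⟩ :=
    (h3.2 w v (ne_of_ends_eq he).symm).exists_walk_avoiding (by norm_num) e huw huv (hreg u).le
  obtain ⟨q₀, hq₀, hq₀p, hq₀e⟩ := p.exists_path
  obtain ⟨q, ⟨hq, hqu, hqe⟩, hmin⟩ := (measure fun q : G.Walk w v => q.edges.length).wf.has_min
    {q | q.support.Nodup ∧ u ∉ q.support ∧ e ∉ q.edges}
    ⟨q₀, hq₀, fun h => hpu (hq₀p h), fun h => hpe (hq₀e h)⟩
  refine ⟨v, .cons e he q, isCycle_cons he hq hqe,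
    isChordless_cons_of_minimal (fun x => (hreg x).le) h3 he hq hqu hqe
      fun q' h₁ h₂ h₃ => hmin q' ⟨h₁, h₂, h₃⟩,
    List.mem_cons_self, ?_⟩
  rintro (_ | ⟨_, hu⟩)
  exacts [huv rfl, hqu hu]

end Multigraph
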